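/- Let n, a, t, k, s be integers with a ≥ 1, s ≥ 3, and 2an = a(a+1) + 2t + 2(k+s). Let α₁ ≥ ... ≥ α_{n-a} ≥ 1 with Σαᵢ = n, α₂ + 2α₃ + ... + (n-a-1)α_{n-a} = n(n-1)/2 - t, α₁ = a - k + 1, and α₂ + α₃ = k (i.e., r = 0). Then the multiset {α₂, α₃, α₄, ...} of remaining parts is either {k-s+4, s-4, 2, 2, 1, 1, ...} or {k-s+3, s-3, 3, 1, 1, ...}. -/

import Mathlib

/-!
Write `eᵢ = αᵢ - 1 ≥ 0` for the excess of the `i`-th part and `m = n - a`. The two sums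
give `∑_{i ≥ 2} eᵢ = k` and, after substituting `2an = a(a+1) + 2t + 2(k+s)`,
`∑ (i - 1) eᵢ = k + s`. As `α₂ + α₃ = k`, the excesses from position 4 on add up to 2, and being
non-increasing they are `(2, 0, …)` or `(1, 1, 0, …)`. The weighted identity then reads
`α₂ + 2α₃ + 3 = k + s` or `α₂ + 2α₃ + 4 = k + s`, which pins down `α₃`. The same two identities
rule out `m ≤ 3`.
-/
open Finset

namespace Finset

lemma sum_Icc_eq_add_sum_Icc_add_one {M : Type*} [AddCommMonoid M] {a b : ℕ} (h : a ≤ b)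
    (f : ℕ → M) : ∑ i ∈ Icc a b, f i = f a + ∑ i ∈ Icc (a + 1) b, f i := by
  rw [← insert_Icc_add_one_left_eq_Icc h, sum_insert (by simp)]

lemma val_Icc_eq_cons {a b : ℕ} (h : a ≤ b) : (Icc a b).val = a ::ₘ (Icc (a + 1) b).val := by
  rw [← insert_Icc_add_one_left_eq_Icc h, insert_val_of_notMem (by simp)]

lemma val_map_eq_replicate {ι β : Type*} {s : Finset ι} {f : ι → β} {b : β}
    (h : ∀ i ∈ s, f i = b) : s.val.map f = Multiset.replicate #s b := by
  rw [Multiset.map_congr rfl h, Multiset.map_const', card_val]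

end Finset

lemma two_mul_sum_Icc_one_sub_one (m : ℕ) : 2 * ∑ i ∈ Icc 1 m, ((i : ℤ) - 1) = m * (m - 1) := by
  induction m with
  | zero => simp
  | succ m ih =>
    rw [sum_Icc_succ_top (by omega), mul_add, ih]
    push_cast
    ring

lemma AntitoneOn.eq_of_sum_Icc_eq_two {f : ℕ → ℕ} {p q : ℕ} (hf : AntitoneOn f (Set.Icc p q))
    (h : ∑ i ∈ Icc p q, f i = 2) :
    (f p = 2 ∧ ∀ i ∈ Icc (p + 1) q, f i = 0) ∨
      (p + 1 ≤ q ∧ f p = 1 ∧ f (p + 1) = 1 ∧ ∀ i ∈ Icc (p + 2) q, f i = 0) := by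
  have hpq : p ≤ q := by
    by_contra hqp
    rw [Icc_eq_empty hqp, sum_empty] at h
    exact two_ne_zero h.symm
  have htail : ∀ i ∈ Icc (p + 2) q, f i = 0 := by
    -- `3 f i ≤ f p + f (p + 1) + f i ≤ 2`
    intro i hi
    rw [mem_Icc] at hi
    have hsub : {p, p + 1, i} ⊆ Icc p q := by
      intro x hx
      simp only [mem_insert, mem_singleton] at hx
      rw [mem_Icc]
      omega
    have h3 := h ▸ sum_le_sum_of_subset hsub
    rw [sum_insert (by simp only [mem_insert, mem_singleton]; omega), sum_pair (by omega)] at h3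
    have := hf (a := p + 1) (b := i) ⟨by omega, by omega⟩ ⟨by omega, by omega⟩ (by omega)
    have := hf (a := p) (b := p + 1) ⟨le_rfl, by omega⟩ ⟨by omega, by omega⟩ (by omega)
    omega
  rw [sum_Icc_eq_add_sum_Icc_add_one hpq] at h
  by_cases h2 : 2 ≤ f p
  · exact Or.inl ⟨by omega, sum_eq_zero_iff.mp (by omega)⟩
  · have hq : p + 1 ≤ q := by
      by_contra hq
      rw [Icc_eq_empty hq, sum_empty] at h
      omega
    rw [sum_Icc_eq_add_sum_Icc_add_one hq, sum_eq_zero htail] at h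
    have := hf (a := p) (b := p + 1) ⟨le_rfl, hpq⟩ ⟨by omega, hq⟩ (by omega)
    exact Or.inr ⟨hq, by omega, by omega, htail⟩

lemma four_le_of_sum_excess {m : ℕ} {k s : ℤ} {α : ℕ → ℕ} (hm : 0 < m) (hs : s ≠ 0)
    (hE : ∑ i ∈ Icc 2 m, ((α i : ℤ) - 1) = k)
    (hW : ∑ i ∈ Icc 1 m, ((i : ℤ) - 1) * ((α i : ℤ) - 1) = k + s)
    (h23 : (α 2 : ℤ) + α 3 = k) : 4 ≤ m := by
  by_contra! h
  interval_cases m <;> simp [sum_Icc_succ_top] at hE hW <;> omega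

lemma sum_Icc_two_excess_eq {n a : ℕ} {k : ℤ} {α : ℕ → ℕ} (hm : 0 < n - a)
    (hsum : ∑ i ∈ Icc 1 (n - a), α i = n) (hexp : (α 1 : ℤ) = a - k + 1) :
    ∑ i ∈ Icc 2 (n - a), ((α i : ℤ) - 1) = k := by
  have hsumZ : ∑ i ∈ Icc 1 (n - a), (α i : ℤ) = n := by exact_mod_cast hsum
  rw [sum_Icc_eq_add_sum_Icc_add_one (a := 1) hm, hexp] at hsumZ
  simp only [Nat.reduceAdd] at hsumZ
  rw [sum_sub_distrib, sum_const, Nat.card_Icc, nsmul_one]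
  omega

lemma sum_Icc_weighted_excess_eq {n a t : ℕ} {k s : ℤ} {α : ℕ → ℕ} (hm : 0 < n - a)
    (hnam : (2 * a * n : ℤ) = a * (a + 1) + 2 * t + 2 * (k + s))
    (hM : (∑ i ∈ Icc 1 (n - a), (i - 1) * α i) + t = n * (n - 1) / 2) :
    ∑ i ∈ Icc 1 (n - a), ((i : ℤ) - 1) * ((α i : ℤ) - 1) = k + s := by
  have hn : (n : ℤ) = (n - a : ℕ) + a := by omega
  have hM2 : 2 * ∑ i ∈ Icc 1 (n - a), ((i : ℤ) - 1) * α i + 2 * t = n * (n - 1) := by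
    have h := congrArg (2 * ·) hM
    simp only [mul_add, Nat.mul_div_cancel' (Nat.even_mul_pred_self n).two_dvd] at h
    have hcast : ((∑ i ∈ Icc 1 (n - a), (i - 1) * α i : ℕ) : ℤ)
        = ∑ i ∈ Icc 1 (n - a), ((i : ℤ) - 1) * α i := by
      push_cast
      exact sum_congr rfl fun i hi => by rw [Nat.cast_sub (mem_Icc.mp hi).1, Nat.cast_one]
    have h' : ((2 * ∑ i ∈ Icc 1 (n - a), (i - 1) * α i + 2 * t : ℕ) : ℤ)
        = ((n * (n - 1) : ℕ) : ℤ) := congrArg _ h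
    simpa [hcast, Nat.cast_sub (show 1 ≤ n by omega)] using h'
  have hG := two_mul_sum_Icc_one_sub_one (n - a)
  have hsplit : ∀ i : ℕ, ((i : ℤ) - 1) * ((α i : ℤ) - 1) = ((i : ℤ) - 1) * α i - ((i : ℤ) - 1) :=
    fun i => by ring
  simp only [hsplit]
  rw [sum_sub_distrib]
  have h2 : 2 * (∑ i ∈ Icc 1 (n - a), ((i : ℤ) - 1) * α i - ∑ i ∈ Icc 1 (n - a), ((i : ℤ) - 1))
      = 2 * (k + s) := by
    linear_combination hM2 - hG + hnam + ((n : ℤ) - a + (n - a : ℕ) - 1) * hn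
  linarith

lemma sum_Icc_four_excess_eq_two {m : ℕ} {k : ℤ} {α : ℕ → ℕ} (hm : 4 ≤ m)
    (hE : ∑ i ∈ Icc 2 m, ((α i : ℤ) - 1) = k) (h23 : (α 2 : ℤ) + α 3 = k)
    (hpos : ∀ i ∈ Icc 4 m, 1 ≤ α i) : ∑ i ∈ Icc 4 m, (α i - 1) = 2 := by
  rw [sum_Icc_eq_add_sum_Icc_add_one (by omega), sum_Icc_eq_add_sum_Icc_add_one (by omega)] at hE
  simp only [Nat.reduceAdd] at hE
  have hcast : ((∑ i ∈ Icc 4 m, (α i - 1) : ℕ) : ℤ) = ∑ i ∈ Icc 4 m, ((α i : ℤ) - 1) := by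
    rw [Nat.cast_sum]
    exact sum_congr rfl fun i hi => by rw [Nat.cast_sub (hpos i hi), Nat.cast_one]
  omega

lemma parts_eq_of_tail_three {m : ℕ} {k s : ℤ} {α : ℕ → ℕ} (hm : 4 ≤ m)
    (hW : ∑ i ∈ Icc 1 m, ((i : ℤ) - 1) * ((α i : ℤ) - 1) = k + s) (h23 : (α 2 : ℤ) + α 3 = k)
    (h4 : α 4 = 3) (hrest : ∀ i ∈ Icc 5 m, α i = 1) :
    ∃ b c : ℕ, (b : ℤ) = k - s + 3 ∧ (c : ℤ) = s - 3 ∧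
      (Icc 2 m).val.map α = b ::ₘ c ::ₘ 3 ::ₘ Multiset.replicate (m - 4) 1 := by
  have hrest0 : ∑ i ∈ Icc 5 m, ((i : ℤ) - 1) * ((α i : ℤ) - 1) = 0 :=
    sum_eq_zero fun i hi => by simp [hrest i hi]
  rw [sum_Icc_eq_add_sum_Icc_add_one (by omega), sum_Icc_eq_add_sum_Icc_add_one (by omega),
    sum_Icc_eq_add_sum_Icc_add_one (by omega), sum_Icc_eq_add_sum_Icc_add_one (by omega)] at hW
  simp only [Nat.reduceAdd] at hW
  rw [hrest0, h4] at hW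
  push_cast at hW
  refine ⟨α 2, α 3, by linarith, by linarith, ?_⟩
  rw [val_Icc_eq_cons (by omega), val_Icc_eq_cons (by omega), val_Icc_eq_cons (by omega),
    Multiset.map_cons, Multiset.map_cons, Multiset.map_cons, h4, val_map_eq_replicate hrest,
    Nat.card_Icc]
  rfl

lemma parts_eq_of_tail_two_two {m : ℕ} {k s : ℤ} {α : ℕ → ℕ} (hm : 5 ≤ m)
    (hW : ∑ i ∈ Icc 1 m, ((i : ℤ) - 1) * ((α i : ℤ) - 1) = k + s) (h23 : (α 2 : ℤ) + α 3 = k)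
    (h4 : α 4 = 2) (h5 : α 5 = 2) (hrest : ∀ i ∈ Icc 6 m, α i = 1) :
    ∃ b c : ℕ, (b : ℤ) = k - s + 4 ∧ (c : ℤ) = s - 4 ∧
      (Icc 2 m).val.map α = b ::ₘ c ::ₘ 2 ::ₘ 2 ::ₘ Multiset.replicate (m - 5) 1 := by
  have hrest0 : ∑ i ∈ Icc 6 m, ((i : ℤ) - 1) * ((α i : ℤ) - 1) = 0 :=
    sum_eq_zero fun i hi => by simp [hrest i hi]
  rw [sum_Icc_eq_add_sum_Icc_add_one (by omega), sum_Icc_eq_add_sum_Icc_add_one (by omega),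
    sum_Icc_eq_add_sum_Icc_add_one (by omega), sum_Icc_eq_add_sum_Icc_add_one (by omega),
    sum_Icc_eq_add_sum_Icc_add_one (by omega)] at hW
  simp only [Nat.reduceAdd] at hW
  rw [hrest0, h4, h5] at hW
  push_cast at hW
  refine ⟨α 2, α 3, by linarith, by linarith, ?_⟩
  rw [val_Icc_eq_cons (by omega), val_Icc_eq_cons (by omega), val_Icc_eq_cons (by omega),
    val_Icc_eq_cons (by omega), Multiset.map_cons, Multiset.map_cons, Multiset.map_cons,
    Multiset.map_cons, h4, h5, val_map_eq_replicate hrest, Nat.card_Icc]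
  rfl

theorem stmt17_general (n a t : ℕ) (k s : ℤ) (α : ℕ → ℕ) (hs : 3 ≤ s)
    (hnam : (2 * a * n : ℤ) = a * (a + 1) + 2 * t + 2 * (k + s))
    (hmono : ∀ i j, 1 ≤ i → i ≤ j → j ≤ n - a → α j ≤ α i)
    (hpos : ∀ i, 1 ≤ i → i ≤ n - a → 1 ≤ α i)
    (hsum : ∑ i ∈ Finset.Icc 1 (n - a), α i = n)
    (hM : (∑ i ∈ Finset.Icc 1 (n - a), (i - 1) * α i) + t = n * (n - 1) / 2)
    (hexp : (α 1 : ℤ) = a - k + 1)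
    (hexpM : (α 2 : ℤ) + α 3 = k) :
    (∃ b c : ℕ, (b : ℤ) = k - s + 4 ∧ (c : ℤ) = s - 4 ∧
      (Finset.Icc 2 (n - a)).val.map α
        = b ::ₘ c ::ₘ 2 ::ₘ 2 ::ₘ Multiset.replicate (n - a - 5) 1) ∨
    (∃ b c : ℕ, (b : ℤ) = k - s + 3 ∧ (c : ℤ) = s - 3 ∧
      (Finset.Icc 2 (n - a)).val.map α
        = b ::ₘ c ::ₘ 3 ::ₘ Multiset.replicate (n - a - 4) 1) := by
  have hk : 0 ≤ k := hexpM ▸ by positivity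
  have hm : 0 < n - a := by
    by_contra! h0
    rw [Nat.le_zero.mp h0, Icc_eq_empty_of_lt zero_lt_one, sum_empty] at hsum
    subst hsum
    push_cast at hnam
    nlinarith
  have hE := sum_Icc_two_excess_eq hm hsum hexp
  have hW := sum_Icc_weighted_excess_eq hm hnam hM
  have h4 := four_le_of_sum_excess hm (by omega) hE hW hexpM
  have hpos' : ∀ i ∈ Icc 4 (n - a), 1 ≤ α i := fun i hi =>
    hpos i (by linarith [(mem_Icc.mp hi).1]) (mem_Icc.mp hi).2
  have hone : ∀ i ∈ Icc 4 (n - a), α i - 1 = 0 → α i = 1 := fun i hi h0 => by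
    have := hpos' i hi
    omega
  have hanti : AntitoneOn (fun i => α i - 1) (Set.Icc 4 (n - a)) := fun i hi j hj hij =>
    Nat.sub_le_sub_right (hmono i j (by linarith [hi.1]) hij hj.2) 1
  rcases hanti.eq_of_sum_Icc_eq_two (sum_Icc_four_excess_eq_two h4 hE hexpM hpos') with
    ⟨h3, hrest⟩ | ⟨h5, h2, h2', hrest⟩
  · exact Or.inr (parts_eq_of_tail_three h4 hW hexpM (by omega)
      fun i hi => hone i (Icc_subset_Icc_left (by norm_num) hi) (hrest i hi))
  · simp only [Nat.reduceAdd] at h2'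
    exact Or.inl (parts_eq_of_tail_two_two h5 hW hexpM (by omega) (by omega)
      fun i hi => hone i (Icc_subset_Icc_left (by norm_num) hi) (hrest i hi))

/-- Corollary 2.5(iii), combinatorially: with `r = 0` (i.e. `α₂ + α₃ = k`)
and `s ≥ 3`, the multiset of parts after the first is either
`{k-s+4, s-4, 2, 2, 1, ..., 1}` or `{k-s+3, s-3, 3, 1, ..., 1}`. -/
theorem stmt17 (n a t : ℕ) (k s : ℤ) (α : ℕ → ℕ) (ha : 1 ≤ a) (hs : 3 ≤ s)
    (hnam : (2 * a * n : ℤ) = a * (a + 1) + 2 * t + 2 * (k + s))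
    (hmono : ∀ i j, 1 ≤ i → i ≤ j → j ≤ n - a → α j ≤ α i)
    (hpos : ∀ i, 1 ≤ i → i ≤ n - a → 1 ≤ α i)
    (hsum : ∑ i ∈ Finset.Icc 1 (n - a), α i = n)
    (hM : (∑ i ∈ Finset.Icc 1 (n - a), (i - 1) * α i) + t = n * (n - 1) / 2)
    (hexp : (α 1 : ℤ) = a - k + 1)
    (hexpM : (α 2 : ℤ) + α 3 = k) :
    (∃ b c : ℕ, (b : ℤ) = k - s + 4 ∧ (c : ℤ) = s - 4 ∧
      (Finset.Icc 2 (n - a)).val.map α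
        = b ::ₘ c ::ₘ 2 ::ₘ 2 ::ₘ Multiset.replicate (n - a - 5) 1) ∨
    (∃ b c : ℕ, (b : ℤ) = k - s + 3 ∧ (c : ℤ) = s - 3 ∧
      (Finset.Icc 2 (n - a)).val.map α
        = b ::ₘ c ::ₘ 3 ::ₘ Multiset.replicate (n - a - 4) 1) :=
  stmt17_general n a t k s α hs hnam hmono hpos hsum hM hexp hexpM
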